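/- arXiv:0710.0186 — 5 statements merged into one kernel-verified Lean document; each statement's English description precedes it below -/
import Mathlib

section
/- Let I be a stable monomial ideal in S = K[x_0,...,x_n] with G(I) its set of minimal monomial generators. Then the set of all monomials of I is the disjoint union over x^A in G(I) of the sets { x^A · x^M : max(A) ≤ min(M) }, where max(A) denotes the largest index of a variable appearing in x^A and min(M) the smallest index of a variable appearing in x^M (with min of the trivial monomial taken as +∞). -/
open MvPolynomial Finsupp

/-- `I` is a monomial ideal: generated by monomials. -/
def IsMonomialIdeal {n : ℕ} {K : Type*} [Field K]
    (I : Ideal (MvPolynomial (Fin (n + 1)) K)) : Prop :=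
  ∃ S : Set (Fin (n + 1) →₀ ℕ),
    I = Ideal.span ((fun A => MvPolynomial.monomial A (1 : K)) '' S)

/-- `I` is a stable monomial ideal: for every monomial `x^A ∈ I` with `k = max(A)`
and every `i < k`, the monomial `(x_i/x_k)·x^A` lies in `I`. -/
def IsStable {n : ℕ} {K : Type*} [Field K]
    (I : Ideal (MvPolynomial (Fin (n + 1)) K)) : Prop :=
  IsMonomialIdeal I ∧
    ∀ (A : Fin (n + 1) →₀ ℕ),
      MvPolynomial.monomial A (1 : K) ∈ I →
      ∀ k i : Fin (n + 1), i < k → A k ≠ 0 → (∀ j ∈ A.support, j ≤ k) →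
        MvPolynomial.monomial (A - Finsupp.single k 1 + Finsupp.single i 1) (1 : K) ∈ I

/-- `x^A` is a minimal monomial generator of the monomial ideal `I`. -/
def MinGen {n : ℕ} {K : Type*} [Field K]
    (I : Ideal (MvPolynomial (Fin (n + 1)) K)) (A : Fin (n + 1) →₀ ℕ) : Prop :=
  MvPolynomial.monomial A (1 : K) ∈ I ∧
    ∀ i : Fin (n + 1), A i ≠ 0 →
      MvPolynomial.monomial (A - Finsupp.single i 1) (1 : K) ∉ I

private lemma mem_of_le' {n : ℕ} {K : Type*} [Field K]
    {I : Ideal (MvPolynomial (Fin (n + 1)) K)}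
    {C D : Fin (n + 1) →₀ ℕ} (h : MvPolynomial.monomial C (1 : K) ∈ I) (hCD : C ≤ D) :
    MvPolynomial.monomial D (1 : K) ∈ I := by
  have hD : MvPolynomial.monomial D (1 : K) =
      MvPolynomial.monomial (D - C) 1 * MvPolynomial.monomial C 1 := by
    rw [MvPolynomial.monomial_mul, one_mul, tsub_add_cancel_of_le hCD]
  rw [hD]
  exact I.mul_mem_left _ h

private lemma ek_exists {n : ℕ} {K : Type*} [Field K]
    {I : Ideal (MvPolynomial (Fin (n + 1)) K)} (hI : IsStable I) :
    ∀ N : ℕ, ∀ B : Fin (n + 1) →₀ ℕ, (∑ j, B j) = N →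
      MvPolynomial.monomial B (1 : K) ∈ I →
      ∃ A : Fin (n + 1) →₀ ℕ, MinGen I A ∧
        ∃ M : Fin (n + 1) →₀ ℕ, B = A + M ∧
          ∀ i ∈ A.support, ∀ j ∈ M.support, i ≤ j := by
  intro N
  induction N using Nat.strong_induction_on with
  | _ N ih =>
    intro B hdeg hB
    by_cases h0 : B = 0
    · subst h0
      exact ⟨0, ⟨hB, fun i hi => by simp at hi⟩, 0, by simp, by simp⟩
    · have hne : B.support.Nonempty := Finsupp.support_nonempty_iff.2 h0
      set k := B.support.max' hne with hkdef
      have hk : B k ≠ 0 := Finsupp.mem_support_iff.1 (B.support.max'_mem hne)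
      have hmax : ∀ j ∈ B.support, j ≤ k := fun j hj => Finset.le_max' _ j hj
      by_cases hsub : MvPolynomial.monomial (B - Finsupp.single k 1) (1 : K) ∈ I
      · -- remove x_k and use induction
        set C : Fin (n + 1) →₀ ℕ := B - Finsupp.single k 1 with hC
        have hlt : (∑ j, C j) < N := by
          rw [← hdeg]
          apply Finset.sum_lt_sum (fun i _ => by
            rw [hC, Finsupp.tsub_apply]; exact tsub_le_self)
          refine ⟨k, Finset.mem_univ k, ?_⟩
          rw [hC, Finsupp.tsub_apply, Finsupp.single_eq_same]
          omega
        obtain ⟨A, hA, M', hBM', hcond⟩ := ih _ hlt C rfl hsub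
        have hsle : Finsupp.single k 1 ≤ B := by
          rw [Finsupp.single_le_iff]; omega
        refine ⟨A, hA, M' + Finsupp.single k 1, ?_, ?_⟩
        · rw [← add_assoc, ← hBM', tsub_add_cancel_of_le hsle]
        · intro i hi j hj
          have hj' : j ∈ M'.support ∪ (Finsupp.single k 1).support :=
            Finsupp.support_add hj
          rcases Finset.mem_union.1 hj' with hj1 | hj2
          · exact hcond i hi j hj1
          · have hjk : j = k := Finset.mem_singleton.1 (Finsupp.support_single_subset hj2)
            subst hjk
            have hiB : A i ≤ B i := by
              have h1 : A i ≤ C i := by rw [hBM']; simp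
              have h2 : C i ≤ B i := by rw [hC, Finsupp.tsub_apply]; exact tsub_le_self
              exact le_trans h1 h2
            have : i ∈ B.support := by
              rw [Finsupp.mem_support_iff]
              have := Finsupp.mem_support_iff.1 hi
              omega
            exact hmax i this
      · -- B is itself a minimal generator
        have hmin : MinGen I B := by
          refine ⟨hB, fun i hi hcon => ?_⟩
          have hik : i ≤ k := hmax i (Finsupp.mem_support_iff.2 hi)
          rcases eq_or_lt_of_le hik with rfl | hik'
          · exact hsub hcon
          · have hink : i ≠ k := ne_of_lt hik'
            have hst := hI.2 (B - Finsupp.single i 1) hcon k i hik'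
              (by rw [Finsupp.tsub_apply, Finsupp.single_apply, if_neg hink]; omega)
              (fun j hj => hmax j (Finsupp.support_tsub hj))
            have hidx : B - Finsupp.single i 1 - Finsupp.single k 1 + Finsupp.single i 1
                = B - Finsupp.single k 1 := by
              ext j
              have e1 : (Finsupp.single i 1 : Fin (n + 1) →₀ ℕ) j
                  = if i = j then 1 else 0 := Finsupp.single_apply
              have e2 : (Finsupp.single k 1 : Fin (n + 1) →₀ ℕ) j
                  = if k = j then 1 else 0 := Finsupp.single_apply
              simp only [Finsupp.add_apply, Finsupp.tsub_apply]
              rcases eq_or_ne i j with h1 | h1 <;> rcases eq_or_ne k j with h2 | h2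
              · exact absurd (h1.trans h2.symm) hink
              · rw [e1, e2, if_pos h1, if_neg h2]
                subst h1; omega
              · rw [e1, e2, if_neg h1, if_pos h2]; omega
              · rw [e1, e2, if_neg h1, if_neg h2]; omega
            rw [hidx] at hst
            exact hsub hst
        exact ⟨B, hmin, 0, by simp, by simp⟩

private lemma ek_key {n : ℕ} {K : Type*} [Field K]
    {I : Ideal (MvPolynomial (Fin (n + 1)) K)}
    {A M A' M' : Fin (n + 1) →₀ ℕ}
    (hA : MinGen I A) (hA' : MinGen I A')
    (heq : A + M = A' + M')
    (hc' : ∀ i ∈ A'.support, ∀ j ∈ M'.support, i ≤ j)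
    {i : Fin (n + 1)} (hlt : A' i < A i) (hmin : ∀ j, j < i → A j = A' j) : False := by
  have h1 : A i + M i = A' i + M' i := by
    have := congrArg (fun f => f i) heq
    simpa using this
  have hMi : i ∈ M'.support := Finsupp.mem_support_iff.2 (by omega)
  have hA'le : A' ≤ A - Finsupp.single i 1 := by
    rw [Finsupp.le_def]
    intro j
    rw [Finsupp.tsub_apply, Finsupp.single_apply]
    rcases lt_trichotomy j i with hj | rfl | hj
    · rw [if_neg (ne_of_gt hj), hmin j hj]; omega
    · rw [if_pos rfl]; omega
    · have hzero : A' j = 0 := by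
        by_contra hz
        exact absurd (hc' j (Finsupp.mem_support_iff.2 hz) i hMi) (not_le.2 hj)
      omega
  exact hA.2 i (by omega) (mem_of_le' hA'.1 hA'le)

/-- Eliahou–Kervaire decomposition: the monomials of a stable ideal `I` are the
disjoint union, over minimal monomial generators `x^A`, of the sets
`{x^A·x^M : max(A) ≤ min(M)}`.  Equivalently: every monomial `x^B ∈ I` admits a
unique minimal generator `x^A` such that `x^B = x^A·x^M` with every variable index
occurring in `A` at most every variable index occurring in `M`. -/
theorem stable_decomposition {n : ℕ} {K : Type*} [Field K]
    (I : Ideal (MvPolynomial (Fin (n + 1)) K)) (hI : IsStable I) :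
    ∀ B : Fin (n + 1) →₀ ℕ, MvPolynomial.monomial B (1 : K) ∈ I →
      ∃! A : Fin (n + 1) →₀ ℕ, MinGen I A ∧
        ∃ M : Fin (n + 1) →₀ ℕ, B = A + M ∧
          ∀ i ∈ A.support, ∀ j ∈ M.support, i ≤ j := by
  intro B hB
  obtain ⟨A, hA, M, hBM, hcond⟩ := ek_exists hI _ B rfl hB
  refine ⟨A, ⟨hA, M, hBM, hcond⟩, ?_⟩
  rintro A' ⟨hA', M', hBM', hcond'⟩
  by_contra hne
  have hfne : (Finset.univ.filter (fun j => A' j ≠ A j)).Nonempty := by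
    by_contra h
    rw [Finset.not_nonempty_iff_eq_empty, Finset.filter_eq_empty_iff] at h
    exact hne (Finsupp.ext fun j => not_ne_iff.1 (h (Finset.mem_univ j)))
  set i := (Finset.univ.filter (fun j => A' j ≠ A j)).min' hfne with hidef
  have hi : A' i ≠ A i := by
    have := Finset.min'_mem (Finset.univ.filter (fun j => A' j ≠ A j)) hfne
    exact (Finset.mem_filter.1 this).2
  have hminlt : ∀ j, j < i → A' j = A j := by
    intro j hj
    by_contra hz
    exact absurd (Finset.min'_le _ j (Finset.mem_filter.2 ⟨Finset.mem_univ j, hz⟩))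
      (not_le.2 hj)
  have heq : A + M = A' + M' := by rw [← hBM, ← hBM']
  rcases lt_trichotomy (A' i) (A i) with hlt | heqi | hlt
  · exact ek_key hA hA' heq hcond' hlt (fun j hj => (hminlt j hj).symm)
  · exact hi heqi
  · exact ek_key hA' hA heq.symm hcond hlt (fun j hj => hminlt j hj)
end

section
/- Let I be a stable monomial ideal and x^B a monomial of I of degree d > 0. Define the sequence x^{B_0} = x^B and x^{B_{i+1}} = x^{B_i} / x_{max(B_i)}. If i is maximal with x^{B_i} ∈ I, then x^{B_i} is a minimal monomial generator of I. -/
open MvPolynomial Finsupp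

/-- `max(A)`: the largest index of a variable dividing `x^A` (junk value `0` for `A = 0`). -/
noncomputable def maxIdx {n : ℕ} (A : Fin (n + 1) →₀ ℕ) : Fin (n + 1) :=
  WithBot.unbotD 0 A.support.max

/-!
Let `k = max(A)` and suppose `x^A / x_j ∈ I` for some `x_j ∣ x^A`. If `j = k` there is nothing to
prove; otherwise `j < k`, the monomial `x^A / x_j` still has maximal variable `x_k`, and one
stability move `x_k ↦ x_j` turns it into `x^A / x_k ∈ I`. So if `x^{B_i}` were not a minimal
generator, `x^{B_{i+1}} = x^{B_i} / x_{max(B_i)}` would lie in `I`, contradicting the maximality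
of `i`.
-/

theorem Finsupp.tsub_single_tsub_single_add_single {ι : Type*} {A : ι →₀ ℕ} {j k : ι}
    (hj : A j ≠ 0) (hjk : j ≠ k) :
    A - single j 1 - single k 1 + single j 1 = A - single k 1 := by
  classical
  ext l
  simp only [add_apply, tsub_apply, single_apply]
  split_ifs <;> grind

namespace maxIdx

variable {n : ℕ} {A : Fin (n + 1) →₀ ℕ}

theorem eq_max' (h : A.support.Nonempty) : maxIdx A = A.support.max' h := by
  rw [maxIdx, ← Finset.coe_max' h]
  rfl

theorem mem_support (h : A ≠ 0) : maxIdx A ∈ A.support := by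
  have hne := support_nonempty_iff.mpr h
  exact eq_max' hne ▸ Finset.max'_mem _ hne

theorem le_of_mem_support {l : Fin (n + 1)} (hl : l ∈ A.support) : l ≤ maxIdx A := by
  have hne : A.support.Nonempty := ⟨l, hl⟩
  exact eq_max' hne ▸ Finset.le_max' _ _ hl

end maxIdx

theorem IsStable.monomial_tsub_single_maxIdx_mem {n : ℕ} {K : Type*} [Field K]
    {I : Ideal (MvPolynomial (Fin (n + 1)) K)} (hI : IsStable I) {A : Fin (n + 1) →₀ ℕ}
    {j : Fin (n + 1)} (hj : A j ≠ 0) (hmem : monomial (A - single j 1) (1 : K) ∈ I) :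
    monomial (A - single (maxIdx A) 1) (1 : K) ∈ I := by
  set k := maxIdx A
  have hjk : j ≤ k := maxIdx.le_of_mem_support (mem_support_iff.mpr hj)
  rcases hjk.eq_or_lt with rfl | hjk
  · exact hmem
  have hAk : A k ≠ 0 := mem_support_iff.mp (maxIdx.mem_support (by rintro rfl; exact hj rfl))
  have hk : (A - single j 1 : Fin (n + 1) →₀ ℕ) k ≠ 0 := by
    simpa [single_apply, hjk.ne] using hAk
  have hsupp : ∀ l ∈ (A - single j 1).support, l ≤ k :=
    fun l hl => maxIdx.le_of_mem_support (support_tsub hl)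
  simpa only [tsub_single_tsub_single_add_single hj hjk.ne] using hI.2 _ hmem k j hjk hk hsupp

theorem stable_chain_min_generator_general {n : ℕ} {K : Type*} [Field K]
    (I : Ideal (MvPolynomial (Fin (n + 1)) K)) (hI : IsStable I)
    (Bseq : ℕ → (Fin (n + 1) →₀ ℕ))
    (hstep : ∀ i, Bseq (i + 1) = Bseq i - Finsupp.single (maxIdx (Bseq i)) 1)
    (i : ℕ)
    (hi : MvPolynomial.monomial (Bseq i) (1 : K) ∈ I)
    (himax : ∀ j, MvPolynomial.monomial (Bseq j) (1 : K) ∈ I → j ≤ i) :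
    MinGen I (Bseq i) := by
  refine ⟨hi, fun j hj hmem => ?_⟩
  have hnext : monomial (Bseq (i + 1)) (1 : K) ∈ I :=
    hstep i ▸ hI.monomial_tsub_single_maxIdx_mem hj hmem
  exact absurd (himax _ hnext) (by omega)

/-- If `x^B ∈ I` has positive degree, and `x^{B_0} = x^B`,
`x^{B_{i+1}} = x^{B_i}/x_{max(B_i)}`, and `i` is maximal with `x^{B_i} ∈ I`,
then `x^{B_i}` is a minimal monomial generator of the stable ideal `I`. -/
theorem stable_chain_min_generator {n : ℕ} {K : Type*} [Field K]
    (I : Ideal (MvPolynomial (Fin (n + 1)) K)) (hI : IsStable I)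
    (B : Fin (n + 1) →₀ ℕ) (hB : MvPolynomial.monomial B (1 : K) ∈ I)
    (hBpos : B ≠ 0)
    (Bseq : ℕ → (Fin (n + 1) →₀ ℕ))
    (h0 : Bseq 0 = B)
    (hstep : ∀ i, Bseq (i + 1) = Bseq i - Finsupp.single (maxIdx (Bseq i)) 1)
    (i : ℕ)
    (hi : MvPolynomial.monomial (Bseq i) (1 : K) ∈ I)
    (himax : ∀ j, MvPolynomial.monomial (Bseq j) (1 : K) ∈ I → j ≤ i) :
    MinGen I (Bseq i) :=
  stable_chain_min_generator_general I hI Bseq hstep i hi himax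
end

section
/- Let I be a stable monomial ideal, and let x^A, x^B be two distinct minimal monomial generators of I. Then there do not exist monomials x^M, x^N with min(M) ≥ max(A) and min(N) ≥ max(B) such that x^A·x^M = x^B·x^N. -/
open MvPolynomial Finsupp

/-- If `x^A ∈ I` and `A ≤ C` pointwise, then `x^C ∈ I`. -/
lemma monomial_mem_of_le {n : ℕ} {K : Type*} [Field K]
    (I : Ideal (MvPolynomial (Fin (n + 1)) K)) {A C : Fin (n + 1) →₀ ℕ}
    (hA : MvPolynomial.monomial A (1 : K) ∈ I) (h : ∀ i, A i ≤ C i) :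
    MvPolynomial.monomial C (1 : K) ∈ I := by
  have hC : C = (C - A) + A := by
    ext i
    simp only [Finsupp.add_apply, Finsupp.tsub_apply]
    have := h i; omega
  have : MvPolynomial.monomial C (1 : K) =
      MvPolynomial.monomial (C - A) (1 : K) * MvPolynomial.monomial A (1 : K) := by
    rw [MvPolynomial.monomial_mul, one_mul, ← hC]
  rw [this]
  exact I.mul_mem_left _ hA

/-- Disjointness in the Eliahou–Kervaire decomposition of a stable ideal: if `x^A`
and `x^B` are distinct minimal monomial generators, there are no monomials
`x^M, x^N` with `min(M) ≥ max(A)`, `min(N) ≥ max(B)` and `x^A·x^M = x^B·x^N`. -/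
theorem stable_decomposition_disjoint {n : ℕ} {K : Type*} [Field K]
    (I : Ideal (MvPolynomial (Fin (n + 1)) K)) (hI : IsStable I)
    (A B : Fin (n + 1) →₀ ℕ) (hA : MinGen I A) (hB : MinGen I B) (hAB : A ≠ B) :
    ¬ ∃ M N : Fin (n + 1) →₀ ℕ,
        (∀ i ∈ A.support, ∀ j ∈ M.support, i ≤ j) ∧
        (∀ i ∈ B.support, ∀ j ∈ N.support, i ≤ j) ∧
        A + M = B + N := by
  rintro ⟨M, N, hM, hN, hE⟩
  have hEi : ∀ i, A i + M i = B i + N i := by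
    intro i
    have := DFunLike.congr_fun hE i
    simpa [Finsupp.add_apply] using this
  -- Step 1: A ≤ B or B ≤ A pointwise.
  have key : (∀ i, A i ≤ B i) ∨ (∀ i, B i ≤ A i) := by
    by_contra h
    push_neg at h
    obtain ⟨⟨i, hi⟩, ⟨j, hj⟩⟩ := h
    -- hi : B i < A i, hj : A j < B j
    have hNi : N i ≠ 0 := by have := hEi i; intro h0; omega
    have hMj : M j ≠ 0 := by have := hEi j; intro h0; omega
    have hAi : i ∈ A.support := Finsupp.mem_support_iff.mpr (by omega)
    have hBj : j ∈ B.support := Finsupp.mem_support_iff.mpr (by omega)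
    have h1 : i ≤ j := hM i hAi j (Finsupp.mem_support_iff.mpr hMj)
    have h2 : j ≤ i := hN j hBj i (Finsupp.mem_support_iff.mpr hNi)
    have : i = j := le_antisymm h1 h2
    subst this
    omega
  -- Step 2: strict domination contradicts minimality.
  rcases key with hle | hle
  · obtain ⟨i, hi⟩ : ∃ i, A i < B i := by
      by_contra h
      push_neg at h
      exact hAB (Finsupp.ext fun i => le_antisymm (hle i) (h i))
    refine hB.2 i (by omega) (monomial_mem_of_le I hA.1 ?_)
    intro k
    simp only [Finsupp.tsub_apply, Finsupp.single_apply]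
    rcases eq_or_ne i k with rfl | hk
    · simp; omega
    · simp [hk]; exact hle k
  · obtain ⟨i, hi⟩ : ∃ i, B i < A i := by
      by_contra h
      push_neg at h
      exact hAB (Finsupp.ext fun i => le_antisymm (h i) (hle i))
    refine hA.2 i (by omega) (monomial_mem_of_le I hB.1 ?_)
    intro k
    simp only [Finsupp.tsub_apply, Finsupp.single_apply]
    rcases eq_or_ne i k with rfl | hk
    · simp; omega
    · simp [hk]; exact hle k
end

section
/- Let J ⊆ S = K[x_0,...,x_n] (char K = 0, K algebraically closed) be an ideal extremal with respect to a term order >, with m the largest degree of a minimal generator and r = dim_K J_m. Let V ⊆ S_m be an r-dimensional subspace such that the point [V] of the Grassmannian Grass(r, S_m) lies in the standard affine open chart centered at [J_m] (i.e., the Plücker coordinate corresponding to the monomial basis of J_m is nonzero on V). Let I = (V). Then dim_K I_{m+1} = dim_K J_{m+1} if and only if dim_K I_z = dim_K J_z for all z ≥ m. -/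
/-!
For `z ≥ m` the degree-`z` piece of `I` is spanned by the products `x^E f_A` (`A ∈ F`); by
extremality the leading monomial of `x^E f_A` is `x^(A+E)`, and these leading monomials are exactly
the monomials of `J_z`. Choosing one product for each monomial of `J_z` gives a triangular family,
so `dim I_z ≥ dim J_z`, with equality iff any two products with the same leading monomial agree
modulo products with smaller leading monomials. This reduction condition holds trivially in
degree `m`, and it propagates from degree `z ≥ m + 1` to `z + 1`: if the shifts `E₁, E₂` share a
variable `x_l`, both products are `x_l` times products of degree `z`; if not, the Borel-fixed
property connects them through a third product sharing a variable with each.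
-/

open MvPolynomial Finsupp

/-- The Borel-fixed condition. -/
def BorelFixed {n : ℕ} {K : Type*} [Field K]
    (I : Ideal (MvPolynomial (Fin (n + 1)) K)) : Prop :=
  IsMonomialIdeal I ∧
    ∀ (A : Fin (n + 1) →₀ ℕ) (i : Fin n),
      MvPolynomial.monomial (A + Finsupp.single i.succ 1) (1 : K) ∈ I →
      MvPolynomial.monomial (A + Finsupp.single i.castSucc 1) (1 : K) ∈ I

/-- `gt` is a term order on exponent vectors. -/
def IsTermOrder {n : ℕ} (gt : (Fin (n + 1) →₀ ℕ) → (Fin (n + 1) →₀ ℕ) → Prop) : Prop :=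
  (∀ A B C, gt A B → gt B C → gt A C) ∧
  (∀ A B, A ≠ B → gt A B ∨ gt B A) ∧
  (∀ A, ¬ gt A A) ∧
  (∀ A B C, gt A B → gt (A + C) (B + C)) ∧
  (∀ A, A ≠ 0 → gt A 0)

/-- The dimension over `K` of the degree-`d` graded piece of an ideal
`I ⊆ K[x_0,…,x_n]`. -/
noncomputable def hilb {n : ℕ} {K : Type*} [Field K]
    (I : Ideal (MvPolynomial (Fin (n + 1)) K)) (d : ℕ) : ℕ :=
  Module.finrank K
    ↥(Submodule.restrictScalars K I ⊓
        MvPolynomial.homogeneousSubmodule (Fin (n + 1)) K d)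

def IsLeadingExp {n : ℕ} {K : Type*} [Field K] (gt : (Fin (n + 1) →₀ ℕ) → (Fin (n + 1) →₀ ℕ) → Prop)
    (ν : Fin (n + 1) →₀ ℕ) (g : MvPolynomial (Fin (n + 1)) K) : Prop :=
  coeff ν g ≠ 0 ∧ ∀ e ∈ g.support, e ≠ ν → gt ν e

namespace IsTermOrder

variable {n : ℕ} {gt : (Fin (n + 1) →₀ ℕ) → (Fin (n + 1) →₀ ℕ) → Prop}

local notation "Exp" => Fin (n + 1) →₀ ℕ

lemma trans (hgt : IsTermOrder gt) {a b c : Exp} (hab : gt a b) (hbc : gt b c) : gt a c :=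
  hgt.1 a b c hab hbc

lemma total (hgt : IsTermOrder gt) {a b : Exp} (h : a ≠ b) : gt a b ∨ gt b a :=
  hgt.2.1 a b h

lemma irrefl (hgt : IsTermOrder gt) (a : Exp) : ¬ gt a a :=
  hgt.2.2.1 a

lemma add_right (hgt : IsTermOrder gt) {a b : Exp} (c : Exp) (h : gt a b) :
    gt (a + c) (b + c) :=
  hgt.2.2.2.1 a b c h

lemma asymm (hgt : IsTermOrder gt) {a b : Exp} (hab : gt a b) : ¬ gt b a :=
  fun hba => hgt.irrefl a (hgt.trans hab hba)

lemma exists_max (hgt : IsTermOrder gt) {s : Finset Exp} (hs : s.Nonempty) :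
    ∃ μ ∈ s, ∀ ν ∈ s, ν ≠ μ → gt μ ν := by
  classical
  induction hs using Finset.Nonempty.cons_induction with
  | singleton a => exact ⟨a, by simp, by simp⟩
  | cons a s ha _ ih =>
    obtain ⟨μ, hμ, hmax⟩ := ih
    have haμ : a ≠ μ := fun h => ha (h ▸ hμ)
    rcases hgt.total haμ with h | h
    · refine ⟨a, by simp, fun ν hν hνa => ?_⟩
      rcases Finset.mem_cons.1 hν with rfl | hν
      · exact absurd rfl hνa
      rcases eq_or_ne ν μ with rfl | hνμ
      · exact h
      · exact hgt.trans h (hmax ν hν hνμ)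
    · refine ⟨μ, Finset.mem_cons_of_mem hμ, fun ν hν hνμ => ?_⟩
      rcases Finset.mem_cons.1 hν with rfl | hν
      · exact h
      · exact hmax ν hν hνμ

lemma induction_on_degree (hgt : IsTermOrder gt) (z : ℕ) {P : Exp → Prop}
    (h : ∀ μ, (∀ ν, ν.degree = z → gt μ ν → P ν) → P μ) (μ : Exp) : P μ := by
  classical
  let below : Exp → Finset Exp := fun μ => (Finset.finsuppAntidiag Finset.univ z).filter (gt μ)
  refine (measure fun μ => (below μ).card).wf.induction μ fun μ ih => h μ fun ν hν hμν => ih ν ?_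
  refine Finset.card_lt_card ⟨fun ρ hρ => ?_, fun hsub => ?_⟩
  · simp only [below, Finset.mem_filter] at hρ ⊢
    exact ⟨hρ.1, hgt.trans hμν hρ.2⟩
  · have : ν ∈ below μ := by
      simp [below, Finset.mem_finsuppAntidiag, ← Finsupp.degree_eq_sum, hν, hμν]
    exact hgt.irrefl ν (Finset.mem_filter.1 (hsub this)).2

variable {K : Type*} [Field K]

lemma coeff_linearCombination_of_isLeadingExp (hgt : IsTermOrder gt)
    {g : Exp → MvPolynomial (Fin (n + 1)) K} {a : Exp →₀ K}
    (hg : ∀ ν ∈ a.support, IsLeadingExp gt ν (g ν)) {μ : Exp} (hμ : μ ∈ a.support)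
    (hmax : ∀ ν ∈ a.support, ν ≠ μ → gt μ ν) :
    coeff μ (Finsupp.linearCombination K g a) = a μ * coeff μ (g μ) := by
  rw [Finsupp.linearCombination_apply, Finsupp.sum, coeff_sum, Finset.sum_eq_single μ _
    (fun h => absurd hμ h), coeff_smul, smul_eq_mul]
  intro ν hν hνμ
  rw [coeff_smul, smul_eq_mul, mul_eq_zero_of_right]
  by_contra hc
  exact hgt.asymm (hmax ν hν hνμ) ((hg ν hν).2 μ (MvPolynomial.mem_support_iff.2 hc) hνμ.symm)

lemma linearIndepOn_of_isLeadingExp (hgt : IsTermOrder gt)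
    {g : Exp → MvPolynomial (Fin (n + 1)) K} {s : Set Exp}
    (hg : ∀ ν ∈ s, IsLeadingExp gt ν (g ν)) : LinearIndepOn K g s := by
  rw [linearIndepOn_iff]
  intro a ha hzero
  by_contra hne
  obtain ⟨μ, hμ, hmax⟩ := hgt.exists_max (Finsupp.support_nonempty_iff.2 hne)
  have hg' : ∀ ν ∈ a.support, IsLeadingExp gt ν (g ν) := fun ν hν => hg ν (ha hν)
  have := hgt.coeff_linearCombination_of_isLeadingExp hg' hμ hmax
  rw [hzero, coeff_zero] at this
  exact mul_ne_zero (Finsupp.mem_support_iff.1 hμ) (hg' μ hμ).1 this.symm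

lemma gt_of_mem_support_of_linearCombination (hgt : IsTermOrder gt)
    {g : Exp → MvPolynomial (Fin (n + 1)) K} {a : Exp →₀ K}
    (hg : ∀ ν ∈ a.support, IsLeadingExp gt ν (g ν)) {μ : Exp}
    (hw : ∀ e ∈ (Finsupp.linearCombination K g a).support, gt μ e) :
    ∀ ν ∈ a.support, gt μ ν := by
  intro ν hν
  obtain ⟨ν₀, hν₀, hmax⟩ := hgt.exists_max ⟨ν, hν⟩
  have hcoeff := hgt.coeff_linearCombination_of_isLeadingExp hg hν₀ hmax
  have hμν₀ : gt μ ν₀ := hw ν₀ (MvPolynomial.mem_support_iff.2 (by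
    rw [hcoeff]; exact mul_ne_zero (Finsupp.mem_support_iff.1 hν₀) (hg ν₀ hν₀).1))
  rcases eq_or_ne ν ν₀ with rfl | hne
  · exact hμν₀
  · exact hgt.trans hμν₀ (hmax ν hν hne)

end IsTermOrder

namespace Finsupp

variable {ι : Type*}

lemma exists_eq_single_add {E : ι →₀ ℕ} {l : ι} (h : E l ≠ 0) : ∃ E', E = single l 1 + E' :=
  le_iff_exists_add.1 (single_le_iff.2 (Nat.one_le_iff_ne_zero.2 h))

lemma exists_le_le_degree_eq {G C : ι →₀ ℕ} (hGC : G ≤ C) {k : ℕ}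
    (hGk : G.degree ≤ k) (hkC : k ≤ C.degree) : ∃ A, G ≤ A ∧ A ≤ C ∧ A.degree = k := by
  induction k, hGk using Nat.le_induction with
  | base => exact ⟨G, le_rfl, hGC, rfl⟩
  | succ k _ ih =>
    obtain ⟨A, hGA, hAC, rfl⟩ := ih (by omega)
    obtain ⟨i, hi⟩ : ∃ i, A i < C i := by
      by_contra! h
      have : A = C := le_antisymm hAC (le_def.2 h)
      subst this
      omega
    refine ⟨A + single i 1, le_add_right hGA, fun j => ?_, by simp⟩
    rcases eq_or_ne i j with rfl | hij
    · simpa using hi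
    · simpa [single_eq_of_ne hij.symm] using hAC j

end Finsupp

section MonomialIdeal

variable {n : ℕ} {K : Type*} [Field K]

local notation "Exp" => Fin (n + 1) →₀ ℕ

open scoped Classical in
noncomputable def monomialExps (J : Ideal (MvPolynomial (Fin (n + 1)) K)) (z : ℕ) : Finset Exp :=
  (Finset.finsuppAntidiag Finset.univ z).filter fun d => monomial d (1 : K) ∈ J

lemma mem_monomialExps {J : Ideal (MvPolynomial (Fin (n + 1)) K)} {z : ℕ} {d : Exp} :
    d ∈ monomialExps J z ↔ d.degree = z ∧ monomial d (1 : K) ∈ J := by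
  simp [monomialExps, Finset.mem_finsuppAntidiag, ← Finsupp.degree_eq_sum]

lemma IsMonomialIdeal.mem_iff {J : Ideal (MvPolynomial (Fin (n + 1)) K)} (hJ : IsMonomialIdeal J)
    {p : MvPolynomial (Fin (n + 1)) K} : p ∈ J ↔ ∀ d ∈ p.support, monomial d (1 : K) ∈ J := by
  obtain ⟨S, rfl⟩ := hJ
  simp [mem_ideal_span_monomial_image]

lemma IsMonomialIdeal.inf_homogeneousSubmodule {J : Ideal (MvPolynomial (Fin (n + 1)) K)}
    (hJ : IsMonomialIdeal J) (z : ℕ) :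
    Submodule.restrictScalars K J ⊓ homogeneousSubmodule (Fin (n + 1)) K z =
      AddMonoidAlgebra.supported K K ↑(monomialExps J z) := by
  ext p
  rw [Submodule.mem_inf, Submodule.restrictScalars_mem, hJ.mem_iff,
    homogeneousSubmodule_eq_finsupp_supported, AddMonoidAlgebra.mem_supported,
    AddMonoidAlgebra.mem_supported]
  simp only [Set.subset_def, Finset.mem_coe, mem_monomialExps]
  exact ⟨fun h d hd => ⟨h.2 d hd, h.1 d hd⟩,
    fun h => ⟨fun d hd => (h d hd).2, fun d hd => (h d hd).1⟩⟩

lemma IsMonomialIdeal.hilb_eq_card {J : Ideal (MvPolynomial (Fin (n + 1)) K)}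
    (hJ : IsMonomialIdeal J) (z : ℕ) : hilb J z = (monomialExps J z).card := by
  rw [hilb, hJ.inf_homogeneousSubmodule, (AddMonoidAlgebra.supportedEquivFinsupp _).finrank_eq,
    Module.finrank_finsupp_self]
  simp

lemma BorelFixed.monomial_add_single_mem_of_le {J : Ideal (MvPolynomial (Fin (n + 1)) K)}
    (hJ : BorelFixed J) (A : Exp) {a b : Fin (n + 1)} (hab : a ≤ b)
    (h : monomial (A + Finsupp.single b 1) (1 : K) ∈ J) :
    monomial (A + Finsupp.single a 1) (1 : K) ∈ J := by
  induction b using Fin.induction with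
  | zero => rwa [nonpos_iff_eq_zero.1 hab]
  | succ i ih =>
    rcases hab.lt_or_eq with hlt | rfl
    · exact ih (Fin.le_castSucc_iff.2 hlt) (hJ.2 A i h)
    · exact h

lemma exists_minGen_le {J : Ideal (MvPolynomial (Fin (n + 1)) K)} {C : Exp}
    (hC : monomial C (1 : K) ∈ J) : ∃ G, MinGen J G ∧ G ≤ C := by
  obtain ⟨G, hGC, hG, hmin⟩ :=
    exists_minimal_le_of_wellFoundedLT (fun G : Exp => monomial G (1 : K) ∈ J) C hC
  refine ⟨G, ⟨hG, fun i hi hmem => ?_⟩, hGC⟩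
  have := Finsupp.le_def.1 (hmin hmem tsub_le_self) i
  simp only [Finsupp.coe_tsub, Pi.sub_apply, Finsupp.single_eq_same] at this
  omega

end MonomialIdeal

/-- A point `[V]` of the chart of `Grass(r, S_m)` centred at `[J_m]`, for an extremal
Borel-fixed ideal `J`: `V` has the basis `f A = x^A + ∑_{B ∈ R} c A B x^B`, `A ∈ F`. -/
structure ExtremalChart (n : ℕ) (K : Type*) [Field K] where
  J : Ideal (MvPolynomial (Fin (n + 1)) K)
  gt : (Fin (n + 1) →₀ ℕ) → (Fin (n + 1) →₀ ℕ) → Prop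
  m : ℕ
  F : Finset (Fin (n + 1) →₀ ℕ)
  R : Finset (Fin (n + 1) →₀ ℕ)
  c : (Fin (n + 1) →₀ ℕ) → (Fin (n + 1) →₀ ℕ) → K
  borelFixed : BorelFixed J
  isTermOrder : IsTermOrder gt
  degree_le_of_minGen : ∀ A, MinGen J A → A.degree ≤ m
  gt_of_mem_of_notMem : ∀ A B : Fin (n + 1) →₀ ℕ, A.degree = m → B.degree = m →
    monomial A (1 : K) ∈ J → monomial B (1 : K) ∉ J → gt A B
  mem_F : ∀ A, A ∈ F ↔ A.degree = m ∧ monomial A (1 : K) ∈ J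
  mem_R : ∀ B, B ∈ R ↔ B.degree = m ∧ monomial B (1 : K) ∉ J

namespace ExtremalChart

variable {n : ℕ} {K : Type*} [Field K] (V : ExtremalChart n K)

local notation "Exp" => Fin (n + 1) →₀ ℕ

noncomputable def f (A : Exp) : MvPolynomial (Fin (n + 1)) K :=
  monomial A 1 + ∑ B ∈ V.R, V.c A B • monomial B 1

noncomputable def gen (p : Exp × Exp) : MvPolynomial (Fin (n + 1)) K :=
  monomial p.2 1 * V.f p.1

def pairs (z : ℕ) : Set (Exp × Exp) :=
  {p | p.1 ∈ V.F ∧ p.2.degree + V.m = z}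

noncomputable def ideal : Ideal (MvPolynomial (Fin (n + 1)) K) :=
  Ideal.span (V.f '' V.F)

noncomputable def piece (z : ℕ) : Submodule K (MvPolynomial (Fin (n + 1)) K) :=
  Submodule.span K (V.gen '' V.pairs z)

noncomputable def lowerSpan (z : ℕ) (μ : Exp) : Submodule K (MvPolynomial (Fin (n + 1)) K) :=
  Submodule.span K (V.gen '' {p | p ∈ V.pairs z ∧ V.gt μ (p.1 + p.2)})

def Reduces (z : ℕ) : Prop :=
  ∀ p₁ ∈ V.pairs z, ∀ p₂ ∈ V.pairs z, p₁.1 + p₁.2 = p₂.1 + p₂.2 →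
    V.gen p₁ - V.gen p₂ ∈ V.lowerSpan z (p₁.1 + p₁.2)

lemma gen_eq (p : Exp × Exp) :
    V.gen p = monomial (p.1 + p.2) 1 + ∑ B ∈ V.R, V.c p.1 B • monomial (p.2 + B) (1 : K) := by
  simp only [gen, f, mul_add, Finset.mul_sum, mul_smul_comm, monomial_mul, one_mul, add_comm p.2]

lemma coeff_gen {p : Exp × Exp} (hp : p.1 ∈ V.F) : coeff (p.1 + p.2) (V.gen p) = 1 := by
  classical
  rw [gen_eq, coeff_add, coeff_monomial, if_pos rfl, coeff_sum, Finset.sum_eq_zero, add_zero]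
  intro B hB
  rw [coeff_smul, coeff_monomial, if_neg, smul_zero]
  intro h
  rw [add_comm p.2, add_left_inj] at h
  exact ((V.mem_R B).1 hB).2 (h ▸ ((V.mem_F _).1 hp).2)

lemma gt_of_mem_support_gen {p : Exp × Exp} (hp : p.1 ∈ V.F) {e : Exp}
    (he : e ∈ (V.gen p).support) (hne : e ≠ p.1 + p.2) : V.gt (p.1 + p.2) e := by
  classical
  rw [gen_eq] at he
  rcases Finset.mem_union.1 (MvPolynomial.support_add he) with he | he
  · exact absurd (Finset.mem_singleton.1 (support_monomial_subset he)) hne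
  obtain ⟨B, hB, he⟩ := Finset.mem_biUnion.1 (support_sum he)
  rw [Finset.mem_singleton.1 (support_monomial_subset (MvPolynomial.support_smul he)), add_comm p.2]
  have hA := (V.mem_F _).1 hp
  have hB := (V.mem_R B).1 hB
  exact V.isTermOrder.add_right p.2 (V.gt_of_mem_of_notMem _ _ hA.1 hB.1 hA.2 hB.2)

lemma isLeadingExp_gen {p : Exp × Exp} (hp : p.1 ∈ V.F) :
    IsLeadingExp V.gt (p.1 + p.2) (V.gen p) :=
  ⟨by rw [V.coeff_gen hp]; exact one_ne_zero, fun _ he hne => V.gt_of_mem_support_gen hp he hne⟩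

lemma gt_of_mem_support_gen_sub {p₁ p₂ : Exp × Exp} (hp₁ : p₁.1 ∈ V.F) (hp₂ : p₂.1 ∈ V.F)
    (hlead : p₁.1 + p₁.2 = p₂.1 + p₂.2) {e : Exp} (he : e ∈ (V.gen p₁ - V.gen p₂).support) :
    V.gt (p₁.1 + p₁.2) e := by
  classical
  have hne : e ≠ p₁.1 + p₁.2 := by
    rintro rfl
    rw [MvPolynomial.mem_support_iff, coeff_sub, V.coeff_gen hp₁, hlead, V.coeff_gen hp₂,
      sub_self] at he
    exact he rfl
  rcases Finset.mem_union.1 (support_sub _ _ _ he) with he | he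
  · exact V.gt_of_mem_support_gen hp₁ he hne
  · rw [hlead] at hne ⊢
    exact V.gt_of_mem_support_gen hp₂ he hne

lemma degree_lead {z : ℕ} {p : Exp × Exp} (hp : p ∈ V.pairs z) : (p.1 + p.2).degree = z := by
  rw [map_add, ((V.mem_F _).1 hp.1).1, add_comm, hp.2]

lemma monomial_lead_mem {p : Exp × Exp} (hp : p.1 ∈ V.F) : monomial (p.1 + p.2) (1 : K) ∈ V.J := by
  rw [show monomial (p.1 + p.2) (1 : K) = monomial p.2 1 * monomial p.1 1 by
    rw [monomial_mul, one_mul, add_comm p.2]]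
  exact V.J.mul_mem_left _ ((V.mem_F _).1 hp).2

lemma gen_mem_homogeneousSubmodule {z : ℕ} {p : Exp × Exp} (hp : p ∈ V.pairs z) :
    V.gen p ∈ homogeneousSubmodule (Fin (n + 1)) K z := by
  have hf : V.f p.1 ∈ homogeneousSubmodule (Fin (n + 1)) K V.m := by
    refine Submodule.add_mem _ (isHomogeneous_monomial _ ((V.mem_F _).1 hp.1).1)
      (Submodule.sum_mem _ fun B hB => Submodule.smul_mem _ _ ?_)
    exact isHomogeneous_monomial _ ((V.mem_R B).1 hB).1
  rw [← hp.2]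
  exact (isHomogeneous_monomial _ rfl).mul hf

lemma piece_le_homogeneousSubmodule (z : ℕ) :
    V.piece z ≤ homogeneousSubmodule (Fin (n + 1)) K z :=
  Submodule.span_le.2 (Set.image_subset_iff.2 fun _ hp => V.gen_mem_homogeneousSubmodule hp)

instance (z : ℕ) : FiniteDimensional K (V.piece z) :=
  haveI : FiniteDimensional K (homogeneousSubmodule (Fin (n + 1)) K z) :=
    Module.Finite.iff_fg.2 (homogeneousSubmodule_fg _ _ z)
  Submodule.finiteDimensional_of_le (V.piece_le_homogeneousSubmodule z)

lemma homogeneousComponent_mul_f_mem {A : Exp} (hA : A ∈ V.F) (z : ℕ)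
    (r : MvPolynomial (Fin (n + 1)) K) : homogeneousComponent z (r * V.f A) ∈ V.piece z := by
  induction r using MvPolynomial.induction_on' with
  | monomial E a =>
    have hgen : monomial E a * V.f A = a • V.gen (A, E) := by
      rw [gen, ← smul_mul_assoc, smul_monomial, smul_eq_mul, mul_one]
    rw [hgen, map_smul, homogeneousComponent_of_mem
      (V.gen_mem_homogeneousSubmodule (z := E.degree + V.m) ⟨hA, rfl⟩)]
    split_ifs with h
    · exact Submodule.smul_mem _ _ (Submodule.subset_span ⟨(A, E), ⟨hA, h.symm⟩, rfl⟩)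
    · exact Submodule.smul_mem _ _ (Submodule.zero_mem _)
  | add p q hp hq => rw [add_mul, map_add]; exact Submodule.add_mem _ hp hq

lemma ideal_inf_homogeneousSubmodule (z : ℕ) :
    Submodule.restrictScalars K V.ideal ⊓ homogeneousSubmodule (Fin (n + 1)) K z = V.piece z := by
  refine le_antisymm ?_ (le_inf ?_ (V.piece_le_homogeneousSubmodule z))
  · rintro q ⟨hqI, hqz⟩
    obtain ⟨l, hl, rfl⟩ := Submodule.mem_span_set.1 (show q ∈ Ideal.span (V.f '' V.F) from hqI)
    have hq := homogeneousComponent_of_mem (m := z) hqz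
    rw [if_pos rfl] at hq
    rw [← hq, Finsupp.sum, map_sum]
    refine Submodule.sum_mem _ fun g hg => ?_
    obtain ⟨A, hA, rfl⟩ := hl hg
    exact V.homogeneousComponent_mul_f_mem hA z _
  · refine Submodule.span_le.2 (Set.image_subset_iff.2 fun p hp => ?_)
    exact V.ideal.mul_mem_left _ (Ideal.subset_span ⟨p.1, hp.1, rfl⟩)

lemma monomial_mul_gen (e : Exp) (p : Exp × Exp) :
    monomial e (1 : K) * V.gen p = V.gen (p.1, e + p.2) := by
  rw [gen, gen, ← mul_assoc, monomial_mul, one_mul]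

lemma monomial_mul_mem_lowerSpan {z : ℕ} {μ : Exp} {w : MvPolynomial (Fin (n + 1)) K}
    (hw : w ∈ V.lowerSpan z μ) (e : Exp) :
    monomial e 1 * w ∈ V.lowerSpan (z + e.degree) (μ + e) := by
  induction hw using Submodule.span_induction with
  | mem x hx =>
    obtain ⟨p, ⟨hp, hgt⟩, rfl⟩ := hx
    rw [monomial_mul_gen]
    refine Submodule.subset_span ⟨(p.1, e + p.2), ⟨⟨hp.1, ?_⟩, ?_⟩, rfl⟩
    · have := hp.2
      simp only [map_add]
      omega
    · rw [show p.1 + (e + p.2) = p.1 + p.2 + e by abel]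
      exact V.isTermOrder.add_right e hgt
  | zero => rw [mul_zero]; exact zero_mem _
  | add x y _ _ hx hy => rw [mul_add]; exact add_mem hx hy
  | smul a x _ hx => rw [mul_smul_comm]; exact Submodule.smul_mem _ a hx

lemma single_add_mem_pairs_succ {z : ℕ} {A E : Exp} {l : Fin (n + 1)} :
    (A, Finsupp.single l 1 + E) ∈ V.pairs (z + 1) ↔ (A, E) ∈ V.pairs z := by
  refine and_congr_right fun _ => ?_
  change (Finsupp.single l 1 + E).degree + V.m = z + 1 ↔ E.degree + V.m = z
  rw [map_add, Finsupp.degree_single]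
  omega

lemma exists_mem_F_le {C : Exp} (hC : monomial C (1 : K) ∈ V.J) (hmC : V.m ≤ C.degree) :
    ∃ A ∈ V.F, A ≤ C := by
  obtain ⟨G, hG, hGC⟩ := exists_minGen_le hC
  obtain ⟨A, hGA, hAC, hA⟩ :=
    Finsupp.exists_le_le_degree_eq hGC (V.degree_le_of_minGen G hG) hmC
  have hAJ : monomial A (1 : K) ∈ V.J := by
    rw [← tsub_add_cancel_of_le hGA, ← one_mul (1 : K), ← monomial_mul]
    exact V.J.mul_mem_left _ hG.1
  exact ⟨A, (V.mem_F A).2 ⟨hA, hAJ⟩, hAC⟩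

lemma exists_pair_lead_eq {z : ℕ} (hz : V.m ≤ z) {ν : Exp} (hν : ν ∈ monomialExps V.J z) :
    ∃ p ∈ V.pairs z, p.1 + p.2 = ν := by
  obtain ⟨hνz, hνJ⟩ := mem_monomialExps.1 hν
  obtain ⟨A, hA, hAν⟩ := V.exists_mem_F_le hνJ (hνz ▸ hz)
  have hlead : A + (ν - A) = ν := add_tsub_cancel_of_le hAν
  refine ⟨(A, ν - A), ⟨hA, ?_⟩, hlead⟩
  have := congrArg Finsupp.degree hlead
  rw [map_add, ((V.mem_F A).1 hA).1, hνz] at this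
  change (ν - A).degree + V.m = z
  omega

def IsLeadSection (z : ℕ) (s : Exp → Exp × Exp) : Prop :=
  ∀ ν ∈ monomialExps V.J z, s ν ∈ V.pairs z ∧ (s ν).1 + (s ν).2 = ν

lemma exists_isLeadSection {z : ℕ} (hz : V.m ≤ z) : ∃ s, V.IsLeadSection z s := by
  choose! s hs using fun ν (hν : ν ∈ monomialExps V.J z) => V.exists_pair_lead_eq hz hν
  exact ⟨s, hs⟩

variable {V} {z : ℕ} {s : (Fin (n + 1) →₀ ℕ) → (Fin (n + 1) →₀ ℕ) × (Fin (n + 1) →₀ ℕ)}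

lemma IsLeadSection.linearIndepOn (hs : V.IsLeadSection z s) :
    LinearIndepOn K (V.gen ∘ s) (monomialExps V.J z : Set Exp) :=
  V.isTermOrder.linearIndepOn_of_isLeadingExp fun ν hν => by
    obtain ⟨hp, hlead⟩ := hs ν hν
    simpa only [Function.comp_apply, hlead] using V.isLeadingExp_gen hp.1

lemma IsLeadSection.finrank_span (hs : V.IsLeadSection z s) :
    Module.finrank K (Submodule.span K ((V.gen ∘ s) '' (monomialExps V.J z : Set Exp))) =
      (monomialExps V.J z).card := by
  rw [Set.image_eq_range, finrank_span_eq_card hs.linearIndepOn]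
  simp

lemma IsLeadSection.span_le_piece (hs : V.IsLeadSection z s) :
    Submodule.span K ((V.gen ∘ s) '' (monomialExps V.J z : Set Exp)) ≤ V.piece z :=
  Submodule.span_le.2 <| Set.image_subset_iff.2 fun ν hν =>
    Submodule.subset_span ⟨s ν, (hs ν hν).1, rfl⟩

lemma IsLeadSection.piece_le_span (hs : V.IsLeadSection z s) (hred : V.Reduces z) :
    V.piece z ≤ Submodule.span K ((V.gen ∘ s) '' (monomialExps V.J z : Set Exp)) := by
  set W := Submodule.span K ((V.gen ∘ s) '' (monomialExps V.J z : Set Exp))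
  suffices h : ∀ μ, ∀ p ∈ V.pairs z, p.1 + p.2 = μ → V.gen p ∈ W from
    Submodule.span_le.2 (Set.image_subset_iff.2 fun p hp => h _ p hp rfl)
  refine V.isTermOrder.induction_on_degree z fun μ ih => ?_
  rintro p hp rfl
  have hμ : p.1 + p.2 ∈ monomialExps V.J z :=
    mem_monomialExps.2 ⟨V.degree_lead hp, V.monomial_lead_mem hp.1⟩
  obtain ⟨hsμ, hslead⟩ := hs _ hμ
  have hlower : V.lowerSpan z (p.1 + p.2) ≤ W :=
    Submodule.span_le.2 <| Set.image_subset_iff.2 fun q hq =>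
      ih _ (V.degree_lead hq.1) hq.2 q hq.1 rfl
  rw [← sub_add_cancel (V.gen p) (V.gen (s (p.1 + p.2)))]
  exact W.add_mem (hlower (hred p hp _ hsμ hslead.symm)) (Submodule.subset_span ⟨_, hμ, rfl⟩)

lemma IsLeadSection.reduces_of_piece_le (hs : V.IsLeadSection z s)
    (h : V.piece z ≤ Submodule.span K ((V.gen ∘ s) '' (monomialExps V.J z : Set Exp))) :
    V.Reduces z := by
  intro p₁ hp₁ p₂ hp₂ hlead
  have hmem : V.gen p₁ - V.gen p₂ ∈ V.piece z :=
    sub_mem (Submodule.subset_span ⟨p₁, hp₁, rfl⟩) (Submodule.subset_span ⟨p₂, hp₂, rfl⟩)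
  obtain ⟨a, ha, hcomb⟩ := (Finsupp.mem_span_image_iff_linearCombination K).1 (h hmem)
  have hlt : ∀ ν ∈ a.support, V.gt (p₁.1 + p₁.2) ν := by
    refine V.isTermOrder.gt_of_mem_support_of_linearCombination (fun ν hν => ?_)
      (hcomb ▸ fun e he => V.gt_of_mem_support_gen_sub hp₁.1 hp₂.1 hlead he)
    obtain ⟨hp, hνlead⟩ := hs ν (ha hν)
    simpa only [Function.comp_apply, hνlead] using V.isLeadingExp_gen hp.1
  have hlower : V.gen p₁ - V.gen p₂ ∈ Submodule.span K
      ((V.gen ∘ s) '' {ν | ν ∈ monomialExps V.J z ∧ V.gt (p₁.1 + p₁.2) ν}) :=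
    (Finsupp.mem_span_image_iff_linearCombination K).2 ⟨a, fun ν hν => ⟨ha hν, hlt ν hν⟩, hcomb⟩
  refine Submodule.span_mono ?_ hlower
  rintro _ ⟨ν, ⟨hν, hgt⟩, rfl⟩
  obtain ⟨hp, hνlead⟩ := hs ν hν
  exact ⟨s ν, ⟨hp, by rwa [hνlead]⟩, rfl⟩

lemma reduces_iff_finrank_piece (hz : V.m ≤ z) :
    V.Reduces z ↔ Module.finrank K (V.piece z) = (monomialExps V.J z).card := by
  obtain ⟨s, hs⟩ := V.exists_isLeadSection hz
  refine ⟨fun hred => ?_, fun h => hs.reduces_of_piece_le ?_⟩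
  · rw [← hs.finrank_span, le_antisymm (hs.piece_le_span hred) hs.span_le_piece]
  · exact (Submodule.eq_of_le_of_finrank_eq hs.span_le_piece (hs.finrank_span.trans h.symm)).ge

/-- Both generators are `x_l` times generators of degree `z`. -/
lemma Reduces.sub_mem_lowerSpan_of_common_var {z : ℕ} (hred : V.Reduces z) {p₁ p₂ : Exp × Exp}
    (hp₁ : p₁ ∈ V.pairs (z + 1)) (hp₂ : p₂ ∈ V.pairs (z + 1)) (hlead : p₁.1 + p₁.2 = p₂.1 + p₂.2)
    {l : Fin (n + 1)} (h₁ : p₁.2 l ≠ 0) (h₂ : p₂.2 l ≠ 0) :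
    V.gen p₁ - V.gen p₂ ∈ V.lowerSpan (z + 1) (p₁.1 + p₁.2) := by
  obtain ⟨A₁, E₁⟩ := p₁
  obtain ⟨A₂, E₂⟩ := p₂
  obtain ⟨E₁, rfl⟩ := Finsupp.exists_eq_single_add h₁
  obtain ⟨E₂, rfl⟩ := Finsupp.exists_eq_single_add h₂
  have hq₁ := V.single_add_mem_pairs_succ.1 hp₁
  have hq₂ := V.single_add_mem_pairs_succ.1 hp₂
  have hlead' : A₁ + E₁ = A₂ + E₂ := by
    refine add_right_cancel (b := Finsupp.single l 1) ?_
    simpa only [add_assoc, add_comm (Finsupp.single l 1)] using hlead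
  have := V.monomial_mul_mem_lowerSpan (hred _ hq₁ _ hq₂ hlead') (Finsupp.single l 1)
  rw [mul_sub, monomial_mul_gen, monomial_mul_gen, Finsupp.degree_single] at this
  rwa [show A₁ + E₁ + Finsupp.single l 1 = A₁ + (Finsupp.single l 1 + E₁) by abel] at this

/-- Move one `x_b` from `A` to the shift and one `x_a` back; Borel-fixedness keeps the new `A` in
`J`, and as the shift has degree `≥ 2` the new shift still shares a variable with the old one. -/
lemma exists_borel_exchange {z : ℕ} (hz : V.m + 1 ≤ z) {p : Exp × Exp} (hp : p ∈ V.pairs (z + 1))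
    {a b : Fin (n + 1)} (hab : a < b) (ha : p.2 a ≠ 0) (hb : p.1 b ≠ 0) :
    ∃ q ∈ V.pairs (z + 1), q.1 + q.2 = p.1 + p.2 ∧ q.2 b ≠ 0 ∧ ∃ l, p.2 l ≠ 0 ∧ q.2 l ≠ 0 := by
  obtain ⟨A, E⟩ := p
  obtain ⟨A, rfl⟩ := Finsupp.exists_eq_single_add hb
  obtain ⟨E, rfl⟩ := Finsupp.exists_eq_single_add ha
  obtain ⟨hAm, hAJ⟩ := (V.mem_F (Finsupp.single b 1 + A)).1 hp.1
  have hA' : Finsupp.single a 1 + A ∈ V.F := by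
    refine (V.mem_F _).2 ⟨by simpa only [map_add, Finsupp.degree_single] using hAm, ?_⟩
    rw [add_comm (Finsupp.single b 1)] at hAJ
    rw [add_comm (Finsupp.single a 1)]
    exact V.borelFixed.monomial_add_single_mem_of_le A hab.le hAJ
  have hE : E ≠ 0 := by
    rintro rfl
    have := hp.2
    simp only [add_zero, Finsupp.degree_single] at this
    omega
  obtain ⟨l, hl⟩ := Finsupp.ne_iff.1 hE
  refine ⟨(Finsupp.single a 1 + A, Finsupp.single b 1 + E), ⟨hA', ?_⟩, by dsimp only; abel,
    by simp, l, ?_, ?_⟩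
  · simpa only [map_add, Finsupp.degree_single] using hp.2
  · simp only [Finsupp.coe_add, Pi.add_apply, Finsupp.coe_zero, Pi.zero_apply] at hl ⊢
    omega
  · simp only [Finsupp.coe_add, Pi.add_apply, Finsupp.coe_zero, Pi.zero_apply] at hl ⊢
    omega

lemma Reduces.sub_mem_lowerSpan_of_lt {z : ℕ} (hz : V.m + 1 ≤ z) (hred : V.Reduces z)
    {p₁ p₂ : Exp × Exp} (hp₁ : p₁ ∈ V.pairs (z + 1)) (hp₂ : p₂ ∈ V.pairs (z + 1))
    (hlead : p₁.1 + p₁.2 = p₂.1 + p₂.2) {a b : Fin (n + 1)} (hab : a < b) (ha : p₁.2 a ≠ 0)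
    (hb₁ : p₁.2 b = 0) (hb₂ : p₂.2 b ≠ 0) :
    V.gen p₁ - V.gen p₂ ∈ V.lowerSpan (z + 1) (p₁.1 + p₁.2) := by
  have hA₁b : p₁.1 b ≠ 0 := by
    have := congrArg (· b) hlead
    simp only [Finsupp.coe_add, Pi.add_apply] at this
    omega
  obtain ⟨q, hq, hqlead, hqb, l, hl₁, hlq⟩ := exists_borel_exchange hz hp₁ hab ha hA₁b
  have h₁ := hred.sub_mem_lowerSpan_of_common_var hp₁ hq hqlead.symm hl₁ hlq
  have h₂ := hred.sub_mem_lowerSpan_of_common_var hq hp₂ (hqlead.trans hlead) hqb hb₂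
  rw [hqlead] at h₂
  simpa only [sub_add_sub_cancel] using add_mem h₁ h₂

lemma Reduces.succ {z : ℕ} (hz : V.m + 1 ≤ z) (hred : V.Reduces z) : V.Reduces (z + 1) := by
  intro p₁ hp₁ p₂ hp₂ hlead
  by_cases hcommon : ∃ l, p₁.2 l ≠ 0 ∧ p₂.2 l ≠ 0
  · obtain ⟨l, h₁, h₂⟩ := hcommon
    exact hred.sub_mem_lowerSpan_of_common_var hp₁ hp₂ hlead h₁ h₂
  push Not at hcommon
  have hne : ∀ {p}, p ∈ V.pairs (z + 1) → p.2 ≠ 0 := fun hp h => by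
    have := hp.2
    rw [h, map_zero] at this
    omega
  obtain ⟨a, ha⟩ := Finsupp.ne_iff.1 (hne hp₁)
  obtain ⟨b, hb⟩ := Finsupp.ne_iff.1 (hne hp₂)
  have hab : a ≠ b := by
    rintro rfl
    exact hb (hcommon a ha)
  rcases hab.lt_or_gt with hab | hba
  · exact hred.sub_mem_lowerSpan_of_lt hz hp₁ hp₂ hlead hab ha
      (by by_contra h; exact hb (hcommon b h)) hb
  · have := hred.sub_mem_lowerSpan_of_lt hz hp₂ hp₁ hlead.symm hba hb (hcommon a ha) ha
    rw [← hlead, ← neg_sub] at this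
    exact neg_mem_iff.1 this

variable (V)

lemma reduces_m : V.Reduces V.m := by
  rintro ⟨A₁, E₁⟩ hp₁ ⟨A₂, E₂⟩ hp₂ hlead
  have h₁ : E₁.degree + V.m = V.m := hp₁.2
  have h₂ : E₂.degree + V.m = V.m := hp₂.2
  obtain rfl : E₁ = 0 := (Finsupp.degree_eq_zero_iff _).1 (by omega)
  obtain rfl : E₂ = 0 := (Finsupp.degree_eq_zero_iff _).1 (by omega)
  simp only [add_zero] at hlead
  simp [hlead]

lemma reduces_of_le (h : V.Reduces (V.m + 1)) {z : ℕ} (hz : V.m ≤ z) : V.Reduces z := by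
  induction z, hz using Nat.le_induction with
  | base => exact V.reduces_m
  | succ z hz ih =>
    rcases hz.eq_or_lt with rfl | hz
    · exact h
    · exact ih.succ hz

lemma hilb_ideal_eq_iff {z : ℕ} (hz : V.m ≤ z) : hilb V.ideal z = hilb V.J z ↔ V.Reduces z := by
  rw [hilb, ideal_inf_homogeneousSubmodule, V.borelFixed.1.hilb_eq_card,
    V.reduces_iff_finrank_piece hz]

end ExtremalChart

theorem local_gotzmann_general {n : ℕ} {K : Type*} [Field K]
    (J : Ideal (MvPolynomial (Fin (n + 1)) K)) (hBorel : BorelFixed J)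
    (gt : (Fin (n + 1) →₀ ℕ) → (Fin (n + 1) →₀ ℕ) → Prop) (hgt : IsTermOrder gt)
    (m : ℕ)
    (hm : ∀ A : Fin (n + 1) →₀ ℕ, MinGen J A → (A.sum fun _ e => e) ≤ m)
    -- extremality: the degree-`m` monomials of `J` are the largest under `gt`
    (hext : ∀ A B : Fin (n + 1) →₀ ℕ,
      (A.sum fun _ e => e) = m → (B.sum fun _ e => e) = m →
      MvPolynomial.monomial A (1 : K) ∈ J → MvPolynomial.monomial B (1 : K) ∉ J →
      gt A B)
    (F R : Finset (Fin (n + 1) →₀ ℕ))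
    (hF : ∀ A, A ∈ F ↔ ((A.sum fun _ e => e) = m ∧ MvPolynomial.monomial A (1 : K) ∈ J))
    (hR : ∀ B, B ∈ R ↔ ((B.sum fun _ e => e) = m ∧ MvPolynomial.monomial B (1 : K) ∉ J))
    (c : (Fin (n + 1) →₀ ℕ) → (Fin (n + 1) →₀ ℕ) → K)
    (I : Ideal (MvPolynomial (Fin (n + 1)) K))
    (hI : I = Ideal.span
      { f | ∃ A ∈ F, f = MvPolynomial.monomial A (1 : K) +
            ∑ B ∈ R, c A B • MvPolynomial.monomial B (1 : K) }) :
    hilb I (m + 1) = hilb J (m + 1) ↔ ∀ z, m ≤ z → hilb I z = hilb J z := by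
  let V : ExtremalChart n K := ⟨J, gt, m, F, R, c, hBorel, hgt, hm, hext, hF, hR⟩
  obtain rfl : I = V.ideal := by
    rw [hI, ExtremalChart.ideal]
    congr 1
    ext f
    exact ⟨fun ⟨A, hA, h⟩ => ⟨A, hA, h.symm⟩, fun ⟨A, hA, h⟩ => ⟨A, hA, h.symm⟩⟩
  refine ⟨fun h z hz => (V.hilb_ideal_eq_iff hz).2 (V.reduces_of_le ?_ hz), fun h => h _ m.le_succ⟩
  exact (V.hilb_ideal_eq_iff m.le_succ).1 h

/-- **Local Gotzmann persistence.**  Let `J` be extremal with respect to the term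
order `gt`, with `m` its largest minimal-generator degree, `F` the exponents of
the degree-`m` monomials of `J` and `R` the degree-`m` standard exponents.  Let
`V ⊆ S_m` be spanned by `f_A = x^A + ∑_{B ∈ R} c_{AB} x^B` (`A ∈ F`) — i.e.
`[V]` lies in the affine chart of `Grass(r, S_m)` centered at `[J_m]` — and let
`I = (V)`.  Then `dim I_{m+1} = dim J_{m+1}` iff `dim I_z = dim J_z` for all `z ≥ m`. -/
theorem local_gotzmann {n : ℕ} {K : Type*} [Field K] [CharZero K] [IsAlgClosed K]
    (J : Ideal (MvPolynomial (Fin (n + 1)) K)) (hBorel : BorelFixed J)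
    (gt : (Fin (n + 1) →₀ ℕ) → (Fin (n + 1) →₀ ℕ) → Prop) (hgt : IsTermOrder gt)
    (m : ℕ)
    (hm : ∀ A : Fin (n + 1) →₀ ℕ, MinGen J A → (A.sum fun _ e => e) ≤ m)
    (hm' : ∃ A : Fin (n + 1) →₀ ℕ, MinGen J A ∧ (A.sum fun _ e => e) = m)
    -- extremality: the degree-`m` monomials of `J` are the largest under `gt`
    (hext : ∀ A B : Fin (n + 1) →₀ ℕ,
      (A.sum fun _ e => e) = m → (B.sum fun _ e => e) = m →
      MvPolynomial.monomial A (1 : K) ∈ J → MvPolynomial.monomial B (1 : K) ∉ J →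
      gt A B)
    (F R : Finset (Fin (n + 1) →₀ ℕ))
    (hF : ∀ A, A ∈ F ↔ ((A.sum fun _ e => e) = m ∧ MvPolynomial.monomial A (1 : K) ∈ J))
    (hR : ∀ B, B ∈ R ↔ ((B.sum fun _ e => e) = m ∧ MvPolynomial.monomial B (1 : K) ∉ J))
    (c : (Fin (n + 1) →₀ ℕ) → (Fin (n + 1) →₀ ℕ) → K)
    (I : Ideal (MvPolynomial (Fin (n + 1)) K))
    (hI : I = Ideal.span
      { f | ∃ A ∈ F, f = MvPolynomial.monomial A (1 : K) +
            ∑ B ∈ R, c A B • MvPolynomial.monomial B (1 : K) }) :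
    hilb I (m + 1) = hilb J (m + 1) ↔ ∀ z, m ≤ z → hilb I z = hilb J z :=
  local_gotzmann_general J hBorel gt hgt m hm hext F R hF hR c I hI
end

section
/- With notation as in the local Gotzmann setup: let J be extremal with respect to >, m its maximal generator degree, V ⊆ S_m spanned by f_A = x^A + Σ_{B∈R} c_{AB} x^B for A ∈ F (F the exponents of monomials of J_m, R the standard exponents), and I = (V). If dim_K I_{m+1} = dim_K J_{m+1}, then the set { x_j f_A : A ∈ F, j ≥ max(A) } is a K-basis of I_{m+1}. -/
open MvPolynomial Finsupp

/-!
In degree `m + 1` the ideal `J` has no minimal generators, so Borel-fixedness lets one strip the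
largest variable from every monomial of `J_{m+1}`: the monomials `x_j x^A` with `A ∈ F` and
`j ≥ max(A)` span `J_{m+1}`. The products `x_j f_A` lie in `I_{m+1}` and have these monomials as
pairwise distinct leading terms, because `J` is extremal (each `x^A`, `A ∈ F`, is above every
standard `x^B`) and the term order is compatible with multiplication. Hence they are linearly
independent, and their number bounds `dim J_{m+1} = dim I_{m+1}` from above, so they span `I_{m+1}`.
-/

open MvPolynomial Finsupp

/-- Indexes the monomials `x_j x^A` (`A ∈ F`, `j ≥ max(A)`) of the stable-ideal decomposition. -/
abbrev StablePairs {α : Type*} [LinearOrder α] (F : Finset (α →₀ ℕ)) : Type _ :=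
  {p : (α →₀ ℕ) × α // p.1 ∈ F ∧ ∀ l ∈ p.1.support, l ≤ p.2}

namespace StablePairs

variable {α : Type*} [LinearOrder α]

instance [Finite α] (F : Finset (α →₀ ℕ)) : Finite (StablePairs F) :=
  ((F.finite_toSet.prod Set.finite_univ).subset fun _ hp => ⟨hp.1, trivial⟩).to_subtype

theorem add_single_injective (F : Finset (α →₀ ℕ)) :
    Function.Injective fun p : StablePairs F => p.1.1 + single p.1.2 1 := by
  rintro ⟨⟨A, j⟩, -, hA⟩ ⟨⟨A', j'⟩, -, hA'⟩ (h : A + single j 1 = A' + single j' 1)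
  dsimp only at hA hA'
  obtain rfl : j = j' := by
    by_contra hne
    have hj' : A j' = A' j' + 1 := by simpa [single_apply, hne] using DFunLike.congr_fun h j'
    have hj : A j + 1 = A' j := by simpa [single_apply, Ne.symm hne] using DFunLike.congr_fun h j
    exact hne (le_antisymm (hA' j (mem_support_iff.mpr (by omega)))
      (hA j' (mem_support_iff.mpr (by omega))))
  obtain rfl := add_right_cancel h
  rfl

end StablePairs

theorem LinearIndependent.span_eq_of_finrank_le {K V ι : Type*} [DivisionRing K]
    [AddCommGroup V] [Module K V] [Finite ι] {v : ι → V} (hv : LinearIndependent K v)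
    {U : Submodule K V} [FiniteDimensional K U] (hle : Submodule.span K (Set.range v) ≤ U)
    (hU : Module.finrank K U ≤ Nat.card ι) : Submodule.span K (Set.range v) = U := by
  have := Fintype.ofFinite ι
  refine Submodule.eq_of_le_of_finrank_le hle ?_
  rwa [finrank_span_eq_card hv, ← Nat.card_eq_fintype_card]

namespace MvPolynomial

section LeadingTerm

variable {σ R : Type*} [CommSemiring R]

/-- `r A E` is read as "`A` is above `E`". -/
def HasMonicLeadingTerm (r : (σ →₀ ℕ) → (σ →₀ ℕ) → Prop) (f : MvPolynomial σ R)
    (A : σ →₀ ℕ) : Prop :=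
  coeff A f = 1 ∧ ∀ E ∈ f.support, E ≠ A → r A E

theorem hasMonicLeadingTerm_monomial_add_sum {r : (σ →₀ ℕ) → (σ →₀ ℕ) → Prop}
    {A : σ →₀ ℕ} {S : Finset (σ →₀ ℕ)} (c : (σ →₀ ℕ) → R) (hAS : A ∉ S)
    (hr : ∀ B ∈ S, r A B) :
    HasMonicLeadingTerm r (monomial A (1 : R) + ∑ B ∈ S, c B • monomial B (1 : R)) A := by
  classical
  refine ⟨by simp [coeff_sum, coeff_smul, coeff_monomial, hAS], fun E hE hEA => ?_⟩
  by_contra hAE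
  have hES : E ∉ S := fun h => hAE (hr E h)
  exact mem_support_iff.mp hE (by simp [coeff_sum, coeff_smul, coeff_monomial, hES, Ne.symm hEA])

theorem HasMonicLeadingTerm.X_mul {r : (σ →₀ ℕ) → (σ →₀ ℕ) → Prop}
    (hr : ∀ A B C, r A B → r (A + C) (B + C)) {f : MvPolynomial σ R} {A : σ →₀ ℕ}
    (hf : HasMonicLeadingTerm r f A) (j : σ) :
    HasMonicLeadingTerm r (X j * f) (A + single j 1) := by
  refine ⟨by rw [add_comm, coeff_X_mul]; exact hf.1, fun E hE hEA => ?_⟩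
  rw [support_X_mul, Finset.mem_map] at hE
  obtain ⟨E', hE', rfl⟩ := hE
  have hE'A : E' ≠ A := by rintro rfl; exact hEA (add_comm _ _)
  rw [addLeftEmbedding_apply, add_comm (single j 1) E']
  exact hr _ _ _ (hf.2 E' hE' hE'A)

end LeadingTerm

theorem linearIndependent_of_hasMonicLeadingTerm {σ R ι : Type*} [CommRing R]
    (r : (σ →₀ ℕ) → (σ →₀ ℕ) → Prop) [IsStrictOrder (σ →₀ ℕ) r]
    {v : ι → MvPolynomial σ R} {μ : ι → σ →₀ ℕ} (hμ : Function.Injective μ)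
    (hv : ∀ i, HasMonicLeadingTerm r (v i) (μ i)) : LinearIndependent R v := by
  classical
  rw [linearIndependent_iff']
  intro s g hsum i hi
  by_contra hgi
  set t := s.filter (g · ≠ 0)
  -- At an `r`-maximal leading exponent `μ i₀`, only `g i₀ • v i₀` has a nonzero coefficient.
  obtain ⟨⟨M, hMt⟩, -, hMmax⟩ := ((t.image μ).finite_toSet.wellFoundedOn (r := r)).has_min
    Set.univ ⟨⟨μ i, Finset.mem_image_of_mem μ (Finset.mem_filter.mpr ⟨hi, hgi⟩)⟩, trivial⟩
  obtain ⟨i₀, hi₀t, rfl⟩ := Finset.mem_image.mp hMt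
  have hvanish : ∀ j ∈ s, j ≠ i₀ → coeff (μ i₀) (g j • v j) = 0 := by
    intro j hj hji₀
    rw [coeff_smul, smul_eq_mul]
    by_cases hgj : g j = 0
    · rw [hgj, zero_mul]
    refine mul_eq_zero_of_right _ (notMem_support_iff.mp fun hmem => ?_)
    exact hMmax ⟨μ j, Finset.mem_image_of_mem μ (Finset.mem_filter.mpr ⟨hj, hgj⟩)⟩ trivial
      ((hv j).2 _ hmem (hμ.ne (Ne.symm hji₀)))
  have hcoeff := congrArg (coeff (μ i₀)) hsum
  rw [coeff_sum, Finset.sum_eq_single i₀ hvanish (fun h => absurd (Finset.mem_filter.mp hi₀t).1 h),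
    coeff_smul, (hv i₀).1, smul_eq_mul, mul_one, coeff_zero] at hcoeff
  exact (Finset.mem_filter.mp hi₀t).2 hcoeff

section Homogeneous

variable {σ R : Type*} [CommSemiring R]

theorem isHomogeneous_monomial_add_sum {A : σ →₀ ℕ} {S : Finset (σ →₀ ℕ)} (c : (σ →₀ ℕ) → R)
    {m : ℕ} (hA : A.degree = m) (hS : ∀ B ∈ S, B.degree = m) :
    (monomial A (1 : R) + ∑ B ∈ S, c B • monomial B (1 : R)).IsHomogeneous m :=
  (isHomogeneous_monomial _ hA).add
    (IsHomogeneous.sum _ _ _ fun B hB => by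
      rw [smul_monomial]
      exact isHomogeneous_monomial _ (hS B hB))

theorem X_mul_mem_inf_homogeneousSubmodule {I : Ideal (MvPolynomial σ R)}
    {f : MvPolynomial σ R} {m : ℕ} (hfI : f ∈ I) (hf : f.IsHomogeneous m) (j : σ) :
    X j * f ∈ I.restrictScalars R ⊓ homogeneousSubmodule σ R (m + 1) := by
  refine ⟨I.mul_mem_left _ hfI, ?_⟩
  have hXf := (isHomogeneous_X R j).mul hf
  rwa [add_comm 1 m] at hXf

instance finiteDimensional_inf_homogeneousSubmodule {K : Type*} [Finite σ] [Field K]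
    (P : Submodule K (MvPolynomial σ K)) (d : ℕ) :
    FiniteDimensional K ↥(P ⊓ homogeneousSubmodule σ K d) :=
  haveI : FiniteDimensional K (homogeneousSubmodule σ K d) :=
    Module.Finite.iff_fg.mpr (homogeneousSubmodule_fg σ K d)
  Submodule.finiteDimensional_of_le inf_le_right

end Homogeneous

end MvPolynomial

section BorelFixed

variable {n : ℕ} {K : Type*} [Field K] {J : Ideal (MvPolynomial (Fin (n + 1)) K)}

theorem IsMonomialIdeal.monomial_mem_of_mem_support (hJ : IsMonomialIdeal J)
    {p : MvPolynomial (Fin (n + 1)) K} (hp : p ∈ J) {E : Fin (n + 1) →₀ ℕ} (hE : E ∈ p.support) :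
    monomial E (1 : K) ∈ J := by
  obtain ⟨S, rfl⟩ := hJ
  obtain ⟨A, hA, hAE⟩ := mem_ideal_span_monomial_image.mp hp E hE
  refine mem_ideal_span_monomial_image.mpr fun E' hE' => ⟨A, hA, ?_⟩
  rwa [Finset.mem_singleton.mp (support_monomial_subset hE')]

theorem IsMonomialIdeal.inf_homogeneousSubmodule_le_span (hJ : IsMonomialIdeal J) (d : ℕ) :
    J.restrictScalars K ⊓ homogeneousSubmodule (Fin (n + 1)) K d ≤
      Submodule.span K ((monomial · (1 : K)) '' {C | monomial C (1 : K) ∈ J ∧ C.degree = d}) := by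
  rintro p ⟨hpJ, hpd⟩
  rw [← restrictSupport_eq_span, mem_restrictSupport_iff]
  intro E hE
  exact ⟨hJ.monomial_mem_of_mem_support hpJ hE,
    (((mem_homogeneousSubmodule _ _).mp hpd).degree_eq_sum_deg_support hE).symm⟩

theorem BorelFixed.monomial_add_single_mem_of_le_s12 (hJ : BorelFixed J) (D : Fin (n + 1) →₀ ℕ)
    {i j : Fin (n + 1)} (hij : i ≤ j) (h : monomial (D + single j 1) (1 : K) ∈ J) :
    monomial (D + single i 1) (1 : K) ∈ J := by
  induction j using Fin.induction generalizing i with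
  | zero => rwa [nonpos_iff_eq_zero.mp hij]
  | succ k ih =>
    rcases hij.lt_or_eq with hlt | rfl
    · exact ih (Fin.le_castSucc_iff.mpr hlt) (hJ.2 D k h)
    · exact h

theorem BorelFixed.monomial_sub_single_mem_of_le (hJ : BorelFixed J) {C : Fin (n + 1) →₀ ℕ}
    {i j : Fin (n + 1)} (hij : i ≤ j) (hCi : C i ≠ 0) (hCj : C j ≠ 0)
    (h : monomial (C - single i 1) (1 : K) ∈ J) : monomial (C - single j 1) (1 : K) ∈ J := by
  rcases eq_or_ne i j with rfl | hne
  · exact h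
  have hi : C - single i 1 = C - single i 1 - single j 1 + single j 1 :=
    (tsub_add_cancel_of_le (single_le_iff.mpr (by simp [hne.symm]; omega))).symm
  have hj : C - single j 1 = C - single i 1 - single j 1 + single i 1 := by
    rw [tsub_right_comm]
    exact (tsub_add_cancel_of_le (single_le_iff.mpr (by simp [hne]; omega))).symm
  rw [hj]
  exact hJ.monomial_add_single_mem_of_le_s12 _ hij (hi ▸ h)

theorem BorelFixed.exists_add_single_eq_of_degree_eq_succ (hJ : BorelFixed J) {m : ℕ}
    (hm : ∀ A, MinGen J A → A.degree ≤ m) {C : Fin (n + 1) →₀ ℕ}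
    (hC : monomial C (1 : K) ∈ J) (hCdeg : C.degree = m + 1) :
    ∃ A j, monomial A (1 : K) ∈ J ∧ A.degree = m ∧ (∀ l ∈ A.support, l ≤ j) ∧
      A + single j 1 = C := by
  have hsupp : C.support.Nonempty := support_nonempty_iff.mpr fun h => by simp [h] at hCdeg
  set j := C.support.max' hsupp
  have hCj : C j ≠ 0 := mem_support_iff.mp (C.support.max'_mem hsupp)
  obtain ⟨i, hCi, hi⟩ : ∃ i, C i ≠ 0 ∧ monomial (C - single i 1) (1 : K) ∈ J := by
    by_contra! h
    have := hm C ⟨hC, h⟩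
    omega
  have hsplit : C - single j 1 + single j 1 = C :=
    tsub_add_cancel_of_le (single_le_iff.mpr (Nat.one_le_iff_ne_zero.mpr hCj))
  refine ⟨C - single j 1, j,
    hJ.monomial_sub_single_mem_of_le (C.support.le_max' i (mem_support_iff.mpr hCi)) hCi hCj hi,
    ?_, fun l hl => C.support.le_max' l (support_tsub hl), hsplit⟩
  have := congrArg degree hsplit
  rw [map_add, degree_single] at this
  omega

theorem BorelFixed.hilb_succ_le_natCard (hJ : BorelFixed J) {m : ℕ}
    (hm : ∀ A, MinGen J A → A.degree ≤ m) {F : Finset (Fin (n + 1) →₀ ℕ)}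
    (hF : ∀ A, monomial A (1 : K) ∈ J → A.degree = m → A ∈ F) :
    hilb J (m + 1) ≤ Nat.card (StablePairs F) := by
  have := Fintype.ofFinite (StablePairs F)
  let u := fun p : StablePairs F => monomial (p.1.1 + single p.1.2 1) (1 : K)
  have := FiniteDimensional.span_of_finite K (Set.finite_range u)
  have hle : J.restrictScalars K ⊓ homogeneousSubmodule (Fin (n + 1)) K (m + 1) ≤
      Submodule.span K (Set.range u) := by
    refine (hJ.1.inf_homogeneousSubmodule_le_span (m + 1)).trans (Submodule.span_mono ?_)
    rintro _ ⟨C, ⟨hC, hCdeg⟩, rfl⟩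
    obtain ⟨A, j, hA, hAdeg, hAj, rfl⟩ := hJ.exists_add_single_eq_of_degree_eq_succ hm hC hCdeg
    exact ⟨⟨(A, j), hF A hA hAdeg, hAj⟩, rfl⟩
  rw [Nat.card_eq_fintype_card]
  exact (Submodule.finrank_mono hle).trans (finrank_range_le_card u)

end BorelFixed

theorem local_gotzmann_basis_general {n : ℕ} {K : Type*} [Field K]
    (J : Ideal (MvPolynomial (Fin (n + 1)) K)) (hBorel : BorelFixed J)
    (gt : (Fin (n + 1) →₀ ℕ) → (Fin (n + 1) →₀ ℕ) → Prop) (hgt : IsTermOrder gt)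
    (m : ℕ)
    (hm : ∀ A : Fin (n + 1) →₀ ℕ, MinGen J A → (A.sum fun _ e => e) ≤ m)
    (hext : ∀ A B : Fin (n + 1) →₀ ℕ,
      (A.sum fun _ e => e) = m → (B.sum fun _ e => e) = m →
      MvPolynomial.monomial A (1 : K) ∈ J → MvPolynomial.monomial B (1 : K) ∉ J →
      gt A B)
    (F R : Finset (Fin (n + 1) →₀ ℕ))
    (hF : ∀ A, A ∈ F ↔ ((A.sum fun _ e => e) = m ∧ MvPolynomial.monomial A (1 : K) ∈ J))
    (hR : ∀ B, B ∈ R ↔ ((B.sum fun _ e => e) = m ∧ MvPolynomial.monomial B (1 : K) ∉ J))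
    (c : (Fin (n + 1) →₀ ℕ) → (Fin (n + 1) →₀ ℕ) → K)
    (fA : (Fin (n + 1) →₀ ℕ) → MvPolynomial (Fin (n + 1)) K)
    (hfA : ∀ A, fA A = MvPolynomial.monomial A (1 : K) +
        ∑ B ∈ R, c A B • MvPolynomial.monomial B (1 : K))
    (I : Ideal (MvPolynomial (Fin (n + 1)) K))
    (hI : I = Ideal.span { f | ∃ A ∈ F, f = fA A })
    (hdim : hilb I (m + 1) = hilb J (m + 1)) :
    LinearIndependent K
      (fun p : {p : (Fin (n + 1) →₀ ℕ) × Fin (n + 1) //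
          p.1 ∈ F ∧ ∀ l ∈ p.1.support, l ≤ p.2} =>
        MvPolynomial.X p.1.2 * fA p.1.1) ∧
    Submodule.span K
      (Set.range (fun p : {p : (Fin (n + 1) →₀ ℕ) × Fin (n + 1) //
          p.1 ∈ F ∧ ∀ l ∈ p.1.support, l ≤ p.2} =>
        MvPolynomial.X p.1.2 * fA p.1.1)) =
      Submodule.restrictScalars K I ⊓
        MvPolynomial.homogeneousSubmodule (Fin (n + 1)) K (m + 1) := by
  obtain ⟨htrans, -, hirr, hmul, -⟩ := hgt
  have : IsStrictOrder _ gt := { irrefl := hirr, trans := htrans }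
  have hli : LinearIndependent K fun p : StablePairs F => X p.1.2 * fA p.1.1 := by
    refine linearIndependent_of_hasMonicLeadingTerm gt (StablePairs.add_single_injective F)
      fun p => hfA p.1.1 ▸ HasMonicLeadingTerm.X_mul hmul ?_ p.1.2
    obtain ⟨hAdeg, hAJ⟩ := (hF _).mp p.2.1
    refine hasMonicLeadingTerm_monomial_add_sum _ (fun hAR => ((hR _).mp hAR).2 hAJ) ?_
    exact fun B hB => hext _ B hAdeg ((hR B).mp hB).1 hAJ ((hR B).mp hB).2
  refine ⟨hli, hli.span_eq_of_finrank_le (Submodule.span_le.mpr ?_) ?_⟩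
  · rintro _ ⟨p, rfl⟩
    refine X_mul_mem_inf_homogeneousSubmodule (hI ▸ Ideal.subset_span ⟨p.1.1, p.2.1, rfl⟩) ?_ _
    exact hfA p.1.1 ▸ isHomogeneous_monomial_add_sum _ ((hF _).mp p.2.1).1
      fun B hB => ((hR B).mp hB).1
  · exact hdim.trans_le
      (hBorel.hilb_succ_le_natCard hm fun A hA hAdeg => (hF A).mpr ⟨hAdeg, hA⟩)

/-- In the local Gotzmann setup: if `dim I_{m+1} = dim J_{m+1}`, then the family
`{x_j · f_A : A ∈ F, j ≥ max(A)}` is a `K`-basis of `I_{m+1}` — it is linearly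
independent and spans the degree-`(m+1)` graded piece of `I`. -/
theorem local_gotzmann_basis {n : ℕ} {K : Type*} [Field K] [CharZero K] [IsAlgClosed K]
    (J : Ideal (MvPolynomial (Fin (n + 1)) K)) (hBorel : BorelFixed J)
    (gt : (Fin (n + 1) →₀ ℕ) → (Fin (n + 1) →₀ ℕ) → Prop) (hgt : IsTermOrder gt)
    (m : ℕ)
    (hm : ∀ A : Fin (n + 1) →₀ ℕ, MinGen J A → (A.sum fun _ e => e) ≤ m)
    (hm' : ∃ A : Fin (n + 1) →₀ ℕ, MinGen J A ∧ (A.sum fun _ e => e) = m)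
    (hext : ∀ A B : Fin (n + 1) →₀ ℕ,
      (A.sum fun _ e => e) = m → (B.sum fun _ e => e) = m →
      MvPolynomial.monomial A (1 : K) ∈ J → MvPolynomial.monomial B (1 : K) ∉ J →
      gt A B)
    (F R : Finset (Fin (n + 1) →₀ ℕ))
    (hF : ∀ A, A ∈ F ↔ ((A.sum fun _ e => e) = m ∧ MvPolynomial.monomial A (1 : K) ∈ J))
    (hR : ∀ B, B ∈ R ↔ ((B.sum fun _ e => e) = m ∧ MvPolynomial.monomial B (1 : K) ∉ J))
    (c : (Fin (n + 1) →₀ ℕ) → (Fin (n + 1) →₀ ℕ) → K)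
    (fA : (Fin (n + 1) →₀ ℕ) → MvPolynomial (Fin (n + 1)) K)
    (hfA : ∀ A, fA A = MvPolynomial.monomial A (1 : K) +
        ∑ B ∈ R, c A B • MvPolynomial.monomial B (1 : K))
    (I : Ideal (MvPolynomial (Fin (n + 1)) K))
    (hI : I = Ideal.span { f | ∃ A ∈ F, f = fA A })
    (hdim : hilb I (m + 1) = hilb J (m + 1)) :
    LinearIndependent K
      (fun p : {p : (Fin (n + 1) →₀ ℕ) × Fin (n + 1) //
          p.1 ∈ F ∧ ∀ l ∈ p.1.support, l ≤ p.2} =>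
        MvPolynomial.X p.1.2 * fA p.1.1) ∧
    Submodule.span K
      (Set.range (fun p : {p : (Fin (n + 1) →₀ ℕ) × Fin (n + 1) //
          p.1 ∈ F ∧ ∀ l ∈ p.1.support, l ≤ p.2} =>
        MvPolynomial.X p.1.2 * fA p.1.1)) =
      Submodule.restrictScalars K I ⊓
        MvPolynomial.homogeneousSubmodule (Fin (n + 1)) K (m + 1) :=
  local_gotzmann_basis_general J hBorel gt hgt m hm hext F R hF hR c fA hfA I hI hdim
end
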